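/- Let Ω ⊆ ℂ be a bounded domain and J ⊆ ∂Ω a nonempty compact set without isolated points. If there exists at least one f ∈ R(Ω) that has infinite difference quotients at every point z₀ ∈ J along J, then the set S(Ω,J) of all such functions is dense in R(Ω): for every g ∈ R(Ω) and every ε > 0 there exists h ∈ S(Ω,J) with sup_{z ∈ cl(Ω)} |g(z) − h(z)| < ε. -/

import Mathlib

open scoped Classical in
/-- Extend a continuous map on `E` to all of `ℂ` by zero. -/
noncomputable def extendFn (E : Set ℂ) (f : C(E, ℂ)) : ℂ → ℂ :=
  fun z => if h : z ∈ E then f ⟨z, h⟩ else 0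

/-- `f` has infinite difference quotients at `z₀` along `J`. -/
def HasInfDiffQuot (f : ℂ → ℂ) (J : Set ℂ) (z₀ : ℂ) : Prop :=
  ∀ M > (0:ℝ), ∀ δ > (0:ℝ), ∃ z ∈ J,
    0 < ‖z - z₀‖ ∧ ‖z - z₀‖ < δ ∧
      M * ‖z - z₀‖ < ‖f z - f z₀‖

/-- Restrictions to `E` of rational functions with poles off `E`. -/
def ratRestrict (E : Set ℂ) : Set C(E, ℂ) :=
  {f | ∃ p q : Polynomial ℂ, (∀ z ∈ E, q.eval z ≠ 0) ∧
    ∀ z : E, f z = p.eval (z : ℂ) / q.eval (z : ℂ)}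

/-! A rational function without poles on `cl Ω` has bounded difference quotients near each
point of `cl Ω`, so adding a nonzero multiple `c • f` of a function `f ∈ S(Ω, J)` to it gives
again an element of `S(Ω, J)`. Letting `c → 0` shows that every rational function, and hence
every element of `R(Ω)`, is a uniform limit of elements of `S(Ω, J)`. -/

open Filter Topology Asymptotics

lemma hasInfDiffQuot_iff_not_isBigO {f : ℂ → ℂ} {J : Set ℂ} {z₀ : ℂ} :
    HasInfDiffQuot f J z₀ ↔
      ¬ (fun z => f z - f z₀) =O[𝓝[J \ {z₀}] z₀] (fun z => z - z₀) := by
  rw [iff_not_comm]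
  simp only [HasInfDiffQuot, isBigO_iff, eventually_nhdsWithin_iff, Metric.eventually_nhds_iff,
    dist_eq_norm, Set.mem_sdiff, Set.mem_singleton_iff]
  push Not
  constructor
  · rintro ⟨c, δ, hδ, hc⟩
    refine ⟨max c 1, by positivity, δ, hδ, fun z hz hpos hlt => ?_⟩
    calc ‖f z - f z₀‖ ≤ c * ‖z - z₀‖ := hc hlt ⟨hz, sub_ne_zero.mp (norm_pos_iff.mp hpos)⟩
      _ ≤ max c 1 * ‖z - z₀‖ := by gcongr; exact le_max_left c 1
  · rintro ⟨M, -, δ, hδ, hM⟩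
    exact ⟨M, δ, hδ, fun z hlt hz => hM z hz.1 (norm_pos_iff.mpr (sub_ne_zero.mpr hz.2)) hlt⟩

lemma HasInfDiffQuot.add_smul_of_isBigO {f g : ℂ → ℂ} {J : Set ℂ} {z₀ : ℂ}
    (hf : HasInfDiffQuot f J z₀)
    (hg : (fun z => g z - g z₀) =O[𝓝[J \ {z₀}] z₀] (fun z => z - z₀)) {c : ℂ} (hc : c ≠ 0) :
    HasInfDiffQuot (g + c • f) J z₀ := by
  rw [hasInfDiffQuot_iff_not_isBigO] at hf ⊢
  refine fun h => hf ?_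
  refine ((h.sub hg).const_mul_left c⁻¹).congr_left fun z => ?_
  simp only [Pi.add_apply, Pi.smul_apply, smul_eq_mul]
  field_simp
  ring

lemma extendFn_of_mem {E : Set ℂ} (f : C(E, ℂ)) {z : ℂ} (hz : z ∈ E) :
    extendFn E f z = f ⟨z, hz⟩ :=
  dif_pos hz

lemma extendFn_add_smul (E : Set ℂ) (r f : C(E, ℂ)) (c : ℂ) :
    extendFn E (r + c • f) = extendFn E r + c • extendFn E f := by
  funext z
  by_cases hz : z ∈ E <;> simp [extendFn, hz]

lemma isBigO_extendFn_sub_of_mem_ratRestrict {E s : Set ℂ} {r : C(E, ℂ)}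
    (hr : r ∈ ratRestrict E) {z₀ : ℂ} (hz₀ : z₀ ∈ E) (hs : s ⊆ E) :
    (fun z => extendFn E r z - extendFn E r z₀) =O[𝓝[s] z₀] (fun z => z - z₀) := by
  obtain ⟨p, q, hq, hpq⟩ := hr
  have hdiff : DifferentiableAt ℂ (fun z => p.eval z / q.eval z) z₀ :=
    p.differentiableAt.div q.differentiableAt (hq z₀ hz₀)
  refine (hdiff.isBigO_sub.mono nhdsWithin_le_nhds).congr' ?_ EventuallyEq.rfl
  filter_upwards [self_mem_nhdsWithin] with z hz
  rw [extendFn_of_mem r (hs hz), extendFn_of_mem r hz₀, hpq, hpq]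

lemma ratRestrict_add_smul_mem {E : Set ℂ} {r f : C(E, ℂ)} (hr : r ∈ ratRestrict E)
    (hf : f ∈ ratRestrict E) (c : ℂ) : r + c • f ∈ ratRestrict E := by
  obtain ⟨p₁, q₁, hq₁, hr⟩ := hr
  obtain ⟨p₂, q₂, hq₂, hf⟩ := hf
  refine ⟨p₁ * q₂ + Polynomial.C c * p₂ * q₁, q₁ * q₂,
    fun z hz => by simpa using mul_ne_zero (hq₁ z hz) (hq₂ z hz), fun z => ?_⟩
  have h₁ := hq₁ z z.2
  have h₂ := hq₂ z z.2
  simp only [ContinuousMap.add_apply, ContinuousMap.smul_apply, smul_eq_mul, hr, hf,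
    Polynomial.eval_add, Polynomial.eval_mul, Polynomial.eval_C]
  field_simp

/-- The set `S(E, J)` of the informal statement. -/
def infDiffQuotSet (E J : Set ℂ) : Set C(E, ℂ) :=
  {h ∈ closure (ratRestrict E) | ∀ z₀ ∈ J, HasInfDiffQuot (extendFn E h) J z₀}

lemma closure_ratRestrict_subset_closure_infDiffQuotSet {E J : Set ℂ} (hJ : J ⊆ E)
    {f : C(E, ℂ)} (hf : f ∈ infDiffQuotSet E J) :
    closure (ratRestrict E) ⊆ closure (infDiffQuotSet E J) := by
  refine closure_minimal (fun r hr => ?_) isClosed_closure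
  have hperturb : ∀ c : ℂ, c ≠ 0 → r + c • f ∈ infDiffQuotSet E J := by
    intro c hc
    refine ⟨map_mem_closure (f := fun x => r + c • x)
      (continuous_const.add (continuous_const_smul c)) hf.1
      fun x hx => ratRestrict_add_smul_mem hr hx c, fun z₀ hz₀ => ?_⟩
    rw [extendFn_add_smul]
    exact (hf.2 z₀ hz₀).add_smul_of_isBigO
      (isBigO_extendFn_sub_of_mem_ratRestrict hr (hJ hz₀) (Set.sdiff_subset.trans hJ)) hc
  have hlim : Tendsto (fun c : ℂ => r + c • f) (𝓝[≠] 0) (𝓝 r) := by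
    have hcont : Continuous fun c : ℂ => r + c • f := by fun_prop
    exact (hcont.tendsto' 0 r (by ext; simp)).mono_left nhdsWithin_le_nhds
  exact mem_closure_of_tendsto hlim (eventually_nhdsWithin_of_forall hperturb)

theorem S_dense_general (Ω : Set ℂ)
    (hΩbdd : Bornology.IsBounded Ω)
    (J : Set ℂ) (hJfr : J ⊆ frontier Ω)
    (hex : ∃ f ∈ closure (ratRestrict (closure Ω)),
      ∀ z₀ ∈ J, HasInfDiffQuot (extendFn (closure Ω) f) J z₀) :
    ∀ g ∈ closure (ratRestrict (closure Ω)), ∀ ε > (0:ℝ),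
      ∃ h ∈ closure (ratRestrict (closure Ω)),
        (∀ z₀ ∈ J, HasInfDiffQuot (extendFn (closure Ω) h) J z₀) ∧
        (⨆ z : closure Ω, ‖g z - h z‖) < ε := by
  intro g hg ε hε
  have : CompactSpace (closure Ω) := isCompact_iff_compactSpace.mp hΩbdd.isCompact_closure
  have hJΩ : J ⊆ closure Ω := hJfr.trans frontier_subset_closure
  obtain ⟨f, hf⟩ := hex
  obtain ⟨h, ⟨hR, hJ⟩, hgh⟩ := Metric.mem_closure_iff.mp
    (closure_ratRestrict_subset_closure_infDiffQuotSet hJΩ hf hg) ε hε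
  refine ⟨h, hR, hJ, ?_⟩
  rwa [dist_eq_norm, ContinuousMap.norm_eq_iSup_norm] at hgh

/-- Let `Ω ⊆ ℂ` be a bounded domain and `J ⊆ ∂Ω` a nonempty compact set without isolated
points.  If some `f ∈ R(Ω)` has infinite difference quotients at every point of `J` along `J`,
then the set `S(Ω, J)` of all such functions is dense in `R(Ω)`: for every `g ∈ R(Ω)` and
`ε > 0` there is `h ∈ S(Ω, J)` with `sup_{z ∈ cl Ω} |g z - h z| < ε`. -/
theorem S_dense (Ω : Set ℂ) (hΩopen : IsOpen Ω) (hΩconn : IsConnected Ω)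
    (hΩbdd : Bornology.IsBounded Ω)
    (J : Set ℂ) (hJne : J.Nonempty) (hJfr : J ⊆ frontier Ω) (hJcpt : IsCompact J)
    (hJperf : ∀ z ∈ J, z ∈ closure (J \ {z}))
    (hex : ∃ f ∈ closure (ratRestrict (closure Ω)),
      ∀ z₀ ∈ J, HasInfDiffQuot (extendFn (closure Ω) f) J z₀) :
    ∀ g ∈ closure (ratRestrict (closure Ω)), ∀ ε > (0:ℝ),
      ∃ h ∈ closure (ratRestrict (closure Ω)),
        (∀ z₀ ∈ J, HasInfDiffQuot (extendFn (closure Ω) h) J z₀) ∧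
        (⨆ z : closure Ω, ‖g z - h z‖) < ε :=
  S_dense_general Ω hΩbdd J hJfr hex
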